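/- arXiv:2510.12983 — 6 statements merged into one kernel-verified Lean document; each statement's English description precedes it below -/
import Mathlib

section
/- Let n0, n1, n2 be natural numbers, B1 a real n0×n1 matrix, B2 a real n1×n2 matrix, D_V an n0×n0 positive definite diagonal real matrix, D_T an n2×n2 positive definite diagonal real matrix, and k > 0. Let Ω be the symmetric block matrix with blocks Ω_{VV} = D_V⁻¹, Ω_{EE} = k·I_{n1}, Ω_{TT} = D_T⁻¹, Ω_{VE} = −B1, Ω_{ET} = −B2, Ω_{VT} = 0 (and transposed blocks accordingly). Assume Ω is positive definite. Then the E-E block of Ω⁻¹ (the covariance of the edge variables) is invertible and its inverse equals k·I_{n1} − B1ᵀ D_V B1 − B2 D_T B2ᵀ; that is, the marginal precision matrix of the edge block is the Schur complement k·I_{n1} − B1ᵀ D_V B1 − B2 D_T B2ᵀ. -/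
open Matrix

/-- For the SGM block precision matrix `Ω` (indexed by vertices ⊕ edges ⊕ triangles),
if `Ω` is positive definite then the E-E block of `Ω⁻¹` is invertible and its inverse
(the marginal precision of the edge variables) equals
`k·I − B1ᵀ D_V B1 − B2 D_T B2ᵀ`. -/
theorem sgm_edge_marginal_precision
    (n0 n1 n2 : ℕ)
    (B1 : Matrix (Fin n0) (Fin n1) ℝ) (B2 : Matrix (Fin n1) (Fin n2) ℝ)
    (DV : Matrix (Fin n0) (Fin n0) ℝ) (DT : Matrix (Fin n2) (Fin n2) ℝ)
    (hDVdiag : DV.IsDiag) (hDVpd : DV.PosDef)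
    (hDTdiag : DT.IsDiag) (hDTpd : DT.PosDef)
    (k : ℝ) (hk : 0 < k)
    (Ω : Matrix (Fin n0 ⊕ (Fin n1 ⊕ Fin n2)) (Fin n0 ⊕ (Fin n1 ⊕ Fin n2)) ℝ)
    (hΩ : Ω = fromBlocks DV⁻¹ (fromCols (-B1) 0) (fromRows (-B1ᵀ) 0)
        (fromBlocks (k • (1 : Matrix (Fin n1) (Fin n1) ℝ)) (-B2) (-B2ᵀ) DT⁻¹))
    (hΩpd : Ω.PosDef) :
    IsUnit ((Ω⁻¹).submatrix (fun e : Fin n1 => Sum.inr (Sum.inl e))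
        (fun e : Fin n1 => Sum.inr (Sum.inl e))) ∧
      ((Ω⁻¹).submatrix (fun e : Fin n1 => Sum.inr (Sum.inl e))
          (fun e : Fin n1 => Sum.inr (Sum.inl e)))⁻¹
        = k • (1 : Matrix (Fin n1) (Fin n1) ℝ) - B1ᵀ * DV * B1 - B2 * DT * B2ᵀ := by
  have hdet : IsUnit Ω.det := isUnit_iff_ne_zero.mpr hΩpd.det_pos.ne'
  have hinv : Ω * Ω⁻¹ = 1 := mul_nonsing_inv Ω hdet
  set SEE := (Ω⁻¹).submatrix (fun e : Fin n1 => Sum.inr (Sum.inl e))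
      (fun e : Fin n1 => Sum.inr (Sum.inl e)) with hSEE
  set SVE := (Ω⁻¹).submatrix (Sum.inl : Fin n0 → _)
      (fun e : Fin n1 => Sum.inr (Sum.inl e)) with hSVE
  set STE := (Ω⁻¹).submatrix (fun t : Fin n2 => Sum.inr (Sum.inr t))
      (fun e : Fin n1 => Sum.inr (Sum.inl e)) with hSTE
  -- block equation row V, col E
  have h1 : DV⁻¹ * SVE = B1 * SEE := by
    ext v e
    have h := congrFun (congrFun hinv (Sum.inl v)) (Sum.inr (Sum.inl e))
    simp only [hΩ, Matrix.mul_apply, Fintype.sum_sum_type, fromBlocks_apply₁₁,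
      fromBlocks_apply₁₂, fromCols_apply_inl, fromCols_apply_inr,
      Matrix.one_apply, Matrix.neg_apply, Matrix.zero_apply, zero_mul,
      Finset.sum_const_zero, add_zero, neg_mul, reduceCtorEq, if_false,
      Finset.sum_neg_distrib] at h
    rw [← hΩ] at h
    simp only [Matrix.mul_apply, hSVE, hSEE, submatrix_apply]
    linarith
  -- block equation row T, col E
  have h2 : DT⁻¹ * STE = B2ᵀ * SEE := by
    ext t e
    have h := congrFun (congrFun hinv (Sum.inr (Sum.inr t))) (Sum.inr (Sum.inl e))
    simp only [hΩ, Matrix.mul_apply, Fintype.sum_sum_type, fromBlocks_apply₂₁,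
      fromBlocks_apply₂₂, fromRows_apply_inr, Matrix.one_apply, Matrix.neg_apply,
      Matrix.zero_apply, zero_mul, Finset.sum_const_zero, zero_add, neg_mul,
      Matrix.transpose_apply, reduceCtorEq, if_false, Sum.inr.injEq,
      Finset.sum_neg_distrib] at h
    rw [← hΩ] at h
    simp only [Matrix.mul_apply, hSTE, hSEE, submatrix_apply, transpose_apply]
    linarith
  -- block equation row E, col E
  have h3 : k • SEE - B1ᵀ * SVE - B2 * STE = 1 := by
    ext e f
    have h := congrFun (congrFun hinv (Sum.inr (Sum.inl e))) (Sum.inr (Sum.inl f))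
    simp only [hΩ, Matrix.mul_apply, Fintype.sum_sum_type, fromBlocks_apply₂₁,
      fromBlocks_apply₂₂, fromRows_apply_inl, Matrix.one_apply, Matrix.neg_apply,
      Matrix.smul_apply, smul_eq_mul, mul_one, one_mul, reduceCtorEq, if_false,
      Sum.inr.injEq, Sum.inl.injEq, mul_ite, ite_mul, mul_zero, zero_mul, neg_mul,
      Finset.sum_ite_eq, Finset.sum_ite_eq', Finset.mem_univ, if_true,
      Finset.sum_neg_distrib] at h
    simp only [Matrix.sub_apply, Matrix.mul_apply, Matrix.smul_apply, smul_eq_mul,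
      hSVE, hSEE, hSTE, submatrix_apply, transpose_apply, Matrix.one_apply]
    rw [← hΩ] at h
    by_cases hef : e = f <;> simp [hef, Matrix.one_apply, mul_ite, ite_mul] at h ⊢ <;> linarith
  have hV : SVE = DV * (B1 * SEE) := by
    rw [← h1, mul_nonsing_inv_cancel_left _ _ (isUnit_iff_ne_zero.mpr hDVpd.det_pos.ne')]
  have hT : STE = DT * (B2ᵀ * SEE) := by
    rw [← h2, mul_nonsing_inv_cancel_left _ _ (isUnit_iff_ne_zero.mpr hDTpd.det_pos.ne')]
  have key : (k • (1 : Matrix (Fin n1) (Fin n1) ℝ) - B1ᵀ * DV * B1 - B2 * DT * B2ᵀ) * SEE = 1 := by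
    rw [Matrix.sub_mul, Matrix.sub_mul, smul_mul_assoc, Matrix.one_mul,
      Matrix.mul_assoc (B1ᵀ * DV) B1 SEE, Matrix.mul_assoc B1ᵀ DV (B1 * SEE), ← hV,
      Matrix.mul_assoc (B2 * DT) B2ᵀ SEE, Matrix.mul_assoc B2 DT (B2ᵀ * SEE), ← hT]
    exact h3
  exact ⟨(Matrix.isUnit_iff_isUnit_det _).mpr (Matrix.isUnit_det_of_left_inverse key), inv_eq_left_inv key⟩
end

section
/- Let B1 be a real n0×n1 matrix and B2 a real n1×n2 matrix with B1 · B2 = 0, let d̃_V ∈ ℝ^{n0} and d̃_T ∈ ℝ^{n2}, and let k > 0. Set Ω_E = k·I_{n1} − k·B1ᵀ diag(d̃_V) B1 − k·B2 diag(d̃_T) B2ᵀ. If the matrices I_{n1} − B1ᵀ diag(d̃_V) B1 and I_{n1} − B2 diag(d̃_T) B2ᵀ are positive definite, then Ω_E is positive definite and log det Ω_E = n1 · log k + log det(I_{n1} − B1ᵀ diag(d̃_V) B1) + log det(I_{n1} − B2 diag(d̃_T) B2ᵀ). -/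
open Matrix

lemma posDef_mul_of_commute {n : ℕ} {P Q : Matrix (Fin n) (Fin n) ℝ}
    (hP : P.PosDef) (hQ : Q.PosDef) (hcomm : P * Q = Q * P) : (P * Q).PosDef := by
  set M := P * Q with hM
  have hPh : Pᵀ = P := hP.isHermitian
  have hQh : Qᵀ = Q := hQ.isHermitian
  have hMherm : M.IsHermitian := by
    show Mᴴ = M
    rw [conjTranspose_eq_transpose_of_trivial, hM, transpose_mul, hPh, hQh]
    exact hcomm.symm
  have hdetQ : IsUnit Q.det := isUnit_iff_ne_zero.mpr (ne_of_gt hQ.det_pos)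
  have hQvec : ∀ x : Fin n → ℝ, x ≠ 0 → Q *ᵥ x ≠ 0 := by
    intro x hx h0
    apply hx
    have h1 : Q⁻¹ *ᵥ (Q *ᵥ x) = Q⁻¹ *ᵥ 0 := congrArg _ h0
    rwa [Matrix.mulVec_mulVec, Matrix.nonsing_inv_mul Q hdetQ, Matrix.one_mulVec,
      Matrix.mulVec_zero] at h1
  have hcong : ∀ x : Fin n → ℝ, x ⬝ᵥ (Q * P * Q) *ᵥ x = (Q *ᵥ x) ⬝ᵥ P *ᵥ (Q *ᵥ x) := by
    intro x
    rw [← Matrix.mulVec_mulVec, ← Matrix.mulVec_mulVec, Matrix.dotProduct_mulVec]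
    nth_rewrite 1 [← hQh]
    rw [Matrix.vecMul_transpose]
  have hG : (Q * P * Q).PosDef := by
    refine .of_dotProduct_mulVec_pos ?_ ?_
    · show (Q * P * Q)ᴴ = Q * P * Q
      rw [conjTranspose_eq_transpose_of_trivial, transpose_mul, transpose_mul, hPh, hQh,
        ← Matrix.mul_assoc]
    · intro x hx
      have := hP.dotProduct_mulVec_pos (hQvec x hx)
      simpa [hcong x] using this
  have heig : ∀ i, 0 < hMherm.eigenvalues i := by
    intro i
    set t := hMherm.eigenvalues i with ht
    set v : Fin n → ℝ := ⇑(hMherm.eigenvectorBasis i) with hv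
    have hvne : v ≠ 0 := by
      have h := hMherm.eigenvectorBasis.orthonormal.ne_zero i
      intro hc
      exact h (by ext j; exact congrFun hc j)
    have hMv : M *ᵥ v = t • v := hMherm.mulVec_eigenvectorBasis i
    have hQM : Q * M = Q * P * Q := by
      rw [hM, ← Matrix.mul_assoc, ← hcomm, Matrix.mul_assoc]
    have h1 : (0:ℝ) < v ⬝ᵥ (Q * M) *ᵥ v := by
      have := hG.dotProduct_mulVec_pos hvne
      rw [hQM]; simpa using this
    have h2 : v ⬝ᵥ (Q * M) *ᵥ v = t * (v ⬝ᵥ Q *ᵥ v) := by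
      rw [← Matrix.mulVec_mulVec, hMv, Matrix.mulVec_smul]
      simp [smul_eq_mul, dotProduct_smul]
    have h3 : (0:ℝ) < v ⬝ᵥ Q *ᵥ v := by simpa using hQ.dotProduct_mulVec_pos hvne
    rw [h2] at h1
    nlinarith
  have hpsd : M.PosSemidef := hMherm.posSemidef_iff_eigenvalues_nonneg.mpr (fun i => le_of_lt (heig i))
  have hdetM : IsUnit M.det := by
    rw [hM, det_mul]
    exact isUnit_iff_ne_zero.mpr (ne_of_gt (mul_pos hP.det_pos hQ.det_pos))
  refine .of_dotProduct_mulVec_pos hMherm fun x hx => ?_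
  rcases lt_or_eq_of_le (hpsd.dotProduct_mulVec_nonneg x) with h | h
  · simpa using h
  · exfalso
    have h0 : M *ᵥ x = 0 := (hpsd.dotProduct_mulVec_zero_iff x).mp h.symm
    apply hx
    have h1 : M⁻¹ *ᵥ (M *ᵥ x) = 0 := by rw [h0, Matrix.mulVec_zero]
    rwa [Matrix.mulVec_mulVec, Matrix.nonsing_inv_mul M hdetM, Matrix.one_mulVec] at h1

/-- If both factors `I − B1ᵀ diag(d̃_V) B1` and `I − B2 diag(d̃_T) B2ᵀ` are positive
definite and `k > 0`, then `Ω_E = kI − k B1ᵀ diag(d̃_V) B1 − k B2 diag(d̃_T) B2ᵀ` is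
positive definite and its log-determinant splits as
`n1 log k + log det(I − B1ᵀ diag(d̃_V) B1) + log det(I − B2 diag(d̃_T) B2ᵀ)`. -/
theorem edge_precision_posdef_logdet
    (n0 n1 n2 : ℕ)
    (B1 : Matrix (Fin n0) (Fin n1) ℝ) (B2 : Matrix (Fin n1) (Fin n2) ℝ)
    (hB : B1 * B2 = 0)
    (dV : Fin n0 → ℝ) (dT : Fin n2 → ℝ) (k : ℝ) (hk : 0 < k)
    (ΩE : Matrix (Fin n1) (Fin n1) ℝ)
    (hΩE : ΩE = k • (1 : Matrix (Fin n1) (Fin n1) ℝ)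
        - k • (B1ᵀ * diagonal dV * B1) - k • (B2 * diagonal dT * B2ᵀ))
    (hV : ((1 : Matrix (Fin n1) (Fin n1) ℝ) - B1ᵀ * diagonal dV * B1).PosDef)
    (hT : ((1 : Matrix (Fin n1) (Fin n1) ℝ) - B2 * diagonal dT * B2ᵀ).PosDef) :
    ΩE.PosDef ∧
      Real.log ΩE.det
        = (n1 : ℝ) * Real.log k
          + Real.log ((1 : Matrix (Fin n1) (Fin n1) ℝ) - B1ᵀ * diagonal dV * B1).det
          + Real.log ((1 : Matrix (Fin n1) (Fin n1) ℝ) - B2 * diagonal dT * B2ᵀ).det := by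
  set A := B1ᵀ * diagonal dV * B1 with hA
  set C := B2 * diagonal dT * B2ᵀ with hC
  set P := (1 : Matrix (Fin n1) (Fin n1) ℝ) - A with hP
  set Q := (1 : Matrix (Fin n1) (Fin n1) ℝ) - C with hQ
  have hBT : B2ᵀ * B1ᵀ = 0 := by
    rw [← transpose_mul, hB, transpose_zero]
  have hAC : A * C = 0 := by
    rw [hA, hC]
    simp only [Matrix.mul_assoc]
    rw [← Matrix.mul_assoc B1 B2, hB]
    simp
  have hCA : C * A = 0 := by
    rw [hA, hC]
    simp only [Matrix.mul_assoc]
    rw [← Matrix.mul_assoc B2ᵀ B1ᵀ, hBT]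
    simp
  have hMeq : P * Q = 1 - A - C := by
    rw [hP, hQ, Matrix.sub_mul, Matrix.mul_sub, Matrix.mul_sub, hAC]
    simp only [Matrix.one_mul, Matrix.mul_one]
    abel
  have hcomm : P * Q = Q * P := by
    rw [hMeq, hQ, hP, Matrix.sub_mul, Matrix.mul_sub, Matrix.mul_sub, hCA]
    simp only [Matrix.one_mul, Matrix.mul_one]
    abel
  have hPQ : (P * Q).PosDef := posDef_mul_of_commute hV hT hcomm
  have hΩ : ΩE = k • (P * Q) := by
    rw [hΩE, hMeq, smul_sub, smul_sub]
  have hΩpos : ΩE.PosDef := by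
    refine .of_dotProduct_mulVec_pos ?_ (fun x hx => ?_)
    · show ΩEᴴ = ΩE
      rw [hΩ]
      show (k • (P * Q))ᵀ = k • (P * Q)
      rw [transpose_smul]
      congr 1
      exact hPQ.1
    · rw [hΩ]
      have : star x ⬝ᵥ (k • (P * Q)) *ᵥ x = k * (star x ⬝ᵥ (P * Q) *ᵥ x) := by
        rw [Matrix.smul_mulVec, dotProduct_smul, smul_eq_mul]
      rw [this]
      exact mul_pos hk (hPQ.dotProduct_mulVec_pos hx)
  refine ⟨hΩpos, ?_⟩
  have hdet : ΩE.det = k ^ n1 * (P.det * Q.det) := by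
    rw [hΩ, Matrix.det_smul, Matrix.det_mul, Fintype.card_fin]
  rw [hdet, Real.log_mul (by positivity) (mul_pos hV.det_pos hT.det_pos).ne',
    Real.log_mul hV.det_pos.ne' hT.det_pos.ne', Real.log_pow]
  ring
end

section
/- Let A and C be real symmetric positive semidefinite n×n matrices with A · C = 0. Then the matrix I_n − A − C is positive definite if and only if both I_n − A and I_n − C are positive definite. -/
open Matrix

lemma quad_helper {n : ℕ} (M N : Matrix (Fin n) (Fin n) ℝ) (hN : Nᵀ = N) (x : Fin n → ℝ) :
    x ⬝ᵥ ((N * (M * N)) *ᵥ x) = (N *ᵥ x) ⬝ᵥ (M *ᵥ (N *ᵥ x)) := by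
  rw [mulVec_mulVec, dotProduct_mulVec, dotProduct_mulVec, ← hN, mulVec_transpose,
    vecMul_vecMul, hN, ← mul_assoc]

/-- For real symmetric PSD matrices `A`, `C` with `A·C = 0`, the matrix `I − A − C`
is positive definite iff both `I − A` and `I − C` are positive definite. -/
theorem one_sub_add_posDef_iff
    (n : ℕ) (A C : Matrix (Fin n) (Fin n) ℝ)
    (hA : A.PosSemidef) (hC : C.PosSemidef) (hAC : A * C = 0) :
    ((1 : Matrix (Fin n) (Fin n) ℝ) - A - C).PosDef ↔
      ((1 : Matrix (Fin n) (Fin n) ℝ) - A).PosDef ∧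
        ((1 : Matrix (Fin n) (Fin n) ℝ) - C).PosDef := by
  have hAT : Aᵀ = A := by
    simpa [conjTranspose_eq_transpose_of_trivial] using hA.1.eq
  have hCT : Cᵀ = C := by
    simpa [conjTranspose_eq_transpose_of_trivial] using hC.1.eq
  have hCA : C * A = 0 := by
    have := congrArg transpose hAC
    simpa [transpose_mul, hAT, hCT] using this
  constructor
  · intro h
    constructor
    · refine PosDef.of_dotProduct_mulVec_pos (by simpa using isHermitian_one.sub hA.1) (fun x hx => ?_)
      have e : ((1 : Matrix (Fin n) (Fin n) ℝ) - A) = (1 - A - C) + C := by abel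
      rw [e, add_mulVec, dotProduct_add]
      exact add_pos_of_pos_of_nonneg (h.dotProduct_mulVec_pos hx) (hC.dotProduct_mulVec_nonneg x)
    · refine PosDef.of_dotProduct_mulVec_pos (by simpa using isHermitian_one.sub hC.1) (fun x hx => ?_)
      have e : ((1 : Matrix (Fin n) (Fin n) ℝ) - C) = (1 - A - C) + A := by abel
      rw [e, add_mulVec, dotProduct_add]
      exact add_pos_of_pos_of_nonneg (h.dotProduct_mulVec_pos hx) (hA.dotProduct_mulVec_nonneg x)
  · rintro ⟨h1, h2⟩
    set S := (open scoped MatrixOrder in CFC.sqrt C) with hS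
    have hSS : S * S = C := by open scoped MatrixOrder in exact CFC.sqrt_mul_sqrt_self C hC.nonneg
    have hSH : Sᵀ = S := by
      simpa [conjTranspose_eq_transpose_of_trivial] using (open scoped MatrixOrder in (Matrix.nonneg_iff_posSemidef.mp (CFC.sqrt_nonneg C)).1.eq)
    have e1 : ((1 : Matrix (Fin n) (Fin n) ℝ) - A) * (1 - C) = 1 - A - C := by
      simp only [mul_sub, sub_mul, one_mul, mul_one, hAC]
      abel
    have e2 : ((1 : Matrix (Fin n) (Fin n) ℝ) - C) * (1 - A - C) = 1 - A - 2 • C + C * C := by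
      simp only [mul_sub, sub_mul, one_mul, mul_one, hCA]
      abel
    have e3 : S * ((1 - C) * S) = C - C * C := by
      have hCS : C * S = S * C := by rw [← hSS, mul_assoc]
      rw [sub_mul, one_mul, mul_sub, hSS, hCS, ← mul_assoc, hSS]
    have key : (1 : Matrix (Fin n) (Fin n) ℝ) - A - C =
        (1 - C) * ((1 - A) * (1 - C)) + S * ((1 - C) * S) := by
      rw [e1, e2, e3]; abel
    refine PosDef.of_dotProduct_mulVec_pos (by simpa using (isHermitian_one.sub hA.1).sub hC.1) (fun x hx => ?_)
    have hv : ((1 - C) *ᵥ x) ≠ 0 := by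
      intro h0
      have := h2.dotProduct_mulVec_pos hx
      rw [h0] at this
      simp at this
    have hCH : ((1 : Matrix (Fin n) (Fin n) ℝ) - C)ᵀ = 1 - C := by
      simp [transpose_sub, hCT]
    have expand : (star x) ⬝ᵥ (((1 : Matrix (Fin n) (Fin n) ℝ) - A - C) *ᵥ x)
        = (((1 - C) *ᵥ x) ⬝ᵥ ((1 - A) *ᵥ ((1 - C) *ᵥ x)))
          + ((S *ᵥ x) ⬝ᵥ ((1 - C) *ᵥ (S *ᵥ x))) := by
      rw [key, add_mulVec, dotProduct_add, star_trivial]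
      rw [quad_helper _ _ hCH, quad_helper _ _ hSH]
    rw [expand]
    have t1 := h1.dotProduct_mulVec_pos hv
    have t2 := h2.posSemidef.dotProduct_mulVec_nonneg (S *ᵥ x)
    rw [star_trivial] at t1 t2
    exact add_pos_of_pos_of_nonneg t1 t2
end

section
/- Let B1 be a real n0×n1 matrix and B2 a real n1×n2 matrix with B1 · B2 = 0, let d̃_V ∈ ℝ^{n0} and d̃_T ∈ ℝ^{n2} be vectors with nonnegative entries, and let k > 0. Then the matrix k·(I_{n1} − B1ᵀ diag(d̃_V) B1)·(I_{n1} − B2 diag(d̃_T) B2ᵀ) is positive definite if and only if both I_{n1} − B1ᵀ diag(d̃_V) B1 and I_{n1} − B2 diag(d̃_T) B2ᵀ are positive definite. -/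
set_option linter.unusedSectionVars false
open Matrix

section AuxEdgePrecision
variable {n : Type*} [Fintype n] [DecidableEq n]

lemma posDef_smul_of_pos' {k : ℝ} (hk : 0 < k) {M : Matrix n n ℝ} (h : M.PosDef) :
    (k • M).PosDef := by
  refine PosDef.of_dotProduct_mulVec_pos ?_ (fun x hx => ?_)
  · show (k • M)ᴴ = k • M
    rw [conjTranspose_smul, h.1, star_trivial]
  · rw [smul_mulVec, dotProduct_smul]
    exact mul_pos hk (h.dotProduct_mulVec_pos hx)

lemma posDef_smul_iff' {k : ℝ} (hk : 0 < k) (M : Matrix n n ℝ) :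
    (k • M).PosDef ↔ M.PosDef := by
  refine ⟨fun h => ?_, posDef_smul_of_pos' hk⟩
  have := posDef_smul_of_pos' (inv_pos.2 hk) h
  rwa [smul_smul, inv_mul_cancel₀ hk.ne', one_smul] at this

lemma mul_posDef_iff_of_orth' {P Q : Matrix n n ℝ} (hP : P.PosSemidef) (hQ : Q.PosSemidef)
    (hPQ : P * Q = 0) (hQP : Q * P = 0) :
    ((1 - P) * (1 - Q)).PosDef ↔ (1 - P).PosDef ∧ (1 - Q).PosDef := by
  have hS : (1 - P) * (1 - Q) = 1 - P - Q := by
    rw [mul_sub, mul_one, sub_mul, one_mul, hPQ, sub_zero]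
  have hPh : (1 - P).IsHermitian := (isHermitian_one).sub hP.1
  have hQh : (1 - Q).IsHermitian := (isHermitian_one).sub hQ.1
  have hSh : (1 - P - Q).IsHermitian := hPh.sub hQ.1
  rw [hS]
  constructor
  · intro h
    refine ⟨PosDef.of_dotProduct_mulVec_pos hPh fun x hx => ?_, PosDef.of_dotProduct_mulVec_pos hQh fun x hx => ?_⟩
    · have h1 := h.dotProduct_mulVec_pos hx
      have h2 := hQ.dotProduct_mulVec_nonneg x
      simp only [sub_mulVec, dotProduct_sub, one_mulVec, star_trivial] at h1 h2 ⊢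
      linarith
    · have h1 := h.dotProduct_mulVec_pos hx
      have h2 := hP.dotProduct_mulVec_nonneg x
      simp only [sub_mulVec, dotProduct_sub, one_mulVec, star_trivial] at h1 h2 ⊢
      linarith
  · rintro ⟨hA, hC⟩
    refine PosDef.of_dotProduct_mulVec_pos hSh fun x hx => ?_
    set y : n → ℝ := (1 - Q) *ᵥ x with hy_def
    have hy : y ≠ 0 := by
      intro h0
      have := hC.dotProduct_mulVec_pos hx
      rw [star_trivial, ← hy_def, h0, dotProduct_zero] at this
      exact lt_irrefl 0 this
    have hCt : (1 - Q)ᵀ = (1 - Q) := by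
      rw [← conjTranspose_eq_transpose_of_trivial]; exact hQh
    -- quadratic form conjugation
    have quad : ∀ M : Matrix n n ℝ,
        y ⬝ᵥ M *ᵥ y = x ⬝ᵥ ((1 - Q) * (M * (1 - Q))) *ᵥ x := by
      intro M
      rw [hy_def, mulVec_mulVec, dotProduct_mulVec, vecMul_mulVec, hCt, ← dotProduct_mulVec]
    -- key matrix identity
    have hM : (1 - Q) * ((1 - P) * (1 - Q)) = 1 - P - Q - Q + Q * P + Q * Q := by
      rw [hS]; noncomm_ring
    have key1 : 0 < x ⬝ᵥ (1 - P - Q - Q + Q * P + Q * Q) *ᵥ x := by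
      have h1 := hA.dotProduct_mulVec_pos hy
      rw [star_trivial, quad, ← Matrix.mul_assoc, Matrix.mul_assoc, hM] at h1
      exact h1
    have hsq : ∀ s : Matrix n n ℝ, s * s = Q → s * (1 - Q) * s = Q - Q * Q := by
      intro s hs; rw [← hs]; noncomm_ring
    have key2 : 0 ≤ x ⬝ᵥ (Q - Q * Q) *ᵥ x := by
      open scoped MatrixOrder in
      have h3 := (hC.posSemidef.conjTranspose_mul_mul_same (CFC.sqrt Q)).dotProduct_mulVec_nonneg x
      open scoped MatrixOrder in
      rw [(CFC.sqrt_nonneg Q).posSemidef.1, hsq _ (CFC.sqrt_mul_sqrt_self Q hQ.nonneg), star_trivial] at h3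
      exact h3
    have hqp : x ⬝ᵥ (Q * P) *ᵥ x = 0 := by rw [hQP]; simp
    rw [star_trivial]
    simp only [sub_mulVec, add_mulVec, dotProduct_sub, dotProduct_add, one_mulVec] at key1 key2 ⊢
    rw [hqp] at key1
    linarith

end AuxEdgePrecision

/-- For incidence matrices with `B1·B2 = 0`, nonnegative weights and `k > 0`, the
product `k (I − B1ᵀ diag(d̃_V) B1)(I − B2 diag(d̃_T) B2ᵀ)` is positive definite iff
both factors are positive definite. -/
theorem edge_precision_posdef_iff_factors
    (n0 n1 n2 : ℕ)
    (B1 : Matrix (Fin n0) (Fin n1) ℝ) (B2 : Matrix (Fin n1) (Fin n2) ℝ)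
    (hB : B1 * B2 = 0)
    (dV : Fin n0 → ℝ) (dT : Fin n2 → ℝ)
    (hdV : ∀ i, 0 ≤ dV i) (hdT : ∀ i, 0 ≤ dT i)
    (k : ℝ) (hk : 0 < k) :
    (k • (((1 : Matrix (Fin n1) (Fin n1) ℝ) - B1ᵀ * diagonal dV * B1) *
        ((1 : Matrix (Fin n1) (Fin n1) ℝ) - B2 * diagonal dT * B2ᵀ))).PosDef ↔
      ((1 : Matrix (Fin n1) (Fin n1) ℝ) - B1ᵀ * diagonal dV * B1).PosDef ∧
        ((1 : Matrix (Fin n1) (Fin n1) ℝ) - B2 * diagonal dT * B2ᵀ).PosDef := by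
  have hP : (B1ᵀ * diagonal dV * B1).PosSemidef := by
    have := (PosSemidef.diagonal (R := ℝ) (fun i => hdV i)).conjTranspose_mul_mul_same B1
    rwa [conjTranspose_eq_transpose_of_trivial] at this
  have hQ : (B2 * diagonal dT * B2ᵀ).PosSemidef := by
    have := (PosSemidef.diagonal (R := ℝ) (fun i => hdT i)).mul_mul_conjTranspose_same B2
    rwa [conjTranspose_eq_transpose_of_trivial] at this
  have h0 : B1ᵀ * diagonal dV * (B1 * B2) * (diagonal dT * B2ᵀ) = 0 := by
    rw [hB]; simp
  have hPQ : (B1ᵀ * diagonal dV * B1) * (B2 * diagonal dT * B2ᵀ) = 0 := by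
    rw [← h0]; simp only [Matrix.mul_assoc]
  have hBt : B2ᵀ * B1ᵀ = 0 := by rw [← transpose_mul, hB, transpose_zero]
  have h1 : B2 * diagonal dT * (B2ᵀ * B1ᵀ) * (diagonal dV * B1) = 0 := by
    rw [hBt]; simp
  have hQP : (B2 * diagonal dT * B2ᵀ) * (B1ᵀ * diagonal dV * B1) = 0 := by
    rw [← h1]; simp only [Matrix.mul_assoc]
  rw [posDef_smul_iff' hk]
  exact mul_posDef_iff_of_orth' hP hQ hPQ hQP
end

section
/- Let A and C be real symmetric positive semidefinite n×n matrices with A · C = 0, and let λ be a nonzero real number. Then λ is an eigenvalue of A + C if and only if λ is an eigenvalue of A or λ is an eigenvalue of C. -/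
open Matrix

/-!
If `A * C = 0` for symmetric `A`, `C`, then also `C * A = 0`, so each of `A`, `C` kills the
`μ`-eigenvectors (`μ ≠ 0`) of the other, and these are then `μ`-eigenvectors of `A + C`.
Conversely, if `(A + C) x = μ x` then applying `A` gives `A (A x) = μ (A x)`: either `A x` is a
`μ`-eigenvector of `A`, or `A x = 0` and `x` is a `μ`-eigenvector of `C`.
-/

namespace Matrix

variable {n R : Type*} [Fintype n]

theorem mul_eq_zero_symm_of_isHermitian [NonUnitalSemiring R] [StarRing R]
    {A C : Matrix n n R} (hA : A.IsHermitian) (hC : C.IsHermitian) (h : A * C = 0) :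
    C * A = 0 := by
  simpa [hA.eq, hC.eq] using congrArg conjTranspose h

variable [CommRing R] {A B C : Matrix n n R} {x : n → R} {μ : R}

theorem mulVec_eq_zero_of_mul_eq_zero_of_mulVec_eq_smul [NoZeroDivisors R]
    (hBA : B * A = 0) (hx : A *ᵥ x = μ • x) (hμ : μ ≠ 0) : B *ᵥ x = 0 := by
  have : μ • B *ᵥ x = 0 := by
    rw [← mulVec_smul, ← hx, mulVec_mulVec, hBA, zero_mulVec]
  exact (smul_eq_zero.mp this).resolve_left hμ

theorem mulVec_mulVec_eq_smul_of_add_mulVec_eq_smul (hAC : A * C = 0)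
    (hx : (A + C) *ᵥ x = μ • x) : A *ᵥ (A *ᵥ x) = μ • (A *ᵥ x) := by
  rw [← mulVec_smul, ← hx, mulVec_mulVec, mulVec_mulVec, mul_add, hAC, add_zero]

end Matrix

/-- For real symmetric PSD matrices `A`, `C` with `A·C = 0`, a nonzero real `μ` is an
eigenvalue of `A + C` iff it is an eigenvalue of `A` or of `C`. -/
theorem eigenvalue_add_of_mul_eq_zero
    (n : ℕ) (A C : Matrix (Fin n) (Fin n) ℝ)
    (hA : A.PosSemidef) (hC : C.PosSemidef) (hAC : A * C = 0)
    (μ : ℝ) (hμ : μ ≠ 0) :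
    (∃ x : Fin n → ℝ, x ≠ 0 ∧ (A + C).mulVec x = μ • x) ↔
      (∃ x : Fin n → ℝ, x ≠ 0 ∧ A.mulVec x = μ • x) ∨
        (∃ x : Fin n → ℝ, x ≠ 0 ∧ C.mulVec x = μ • x) := by
  have hCA : C * A = 0 := mul_eq_zero_symm_of_isHermitian hA.isHermitian hC.isHermitian hAC
  constructor
  · rintro ⟨x, hx, hsum⟩
    by_cases hAx : A *ᵥ x = 0
    · exact Or.inr ⟨x, hx, by rwa [add_mulVec, hAx, zero_add] at hsum⟩
    · exact Or.inl ⟨A *ᵥ x, hAx, mulVec_mulVec_eq_smul_of_add_mulVec_eq_smul hAC hsum⟩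
  · rintro (⟨x, hx, hAx⟩ | ⟨x, hx, hCx⟩)
    · have hCx := mulVec_eq_zero_of_mul_eq_zero_of_mulVec_eq_smul hCA hAx hμ
      exact ⟨x, hx, by rw [add_mulVec, hAx, hCx, add_zero]⟩
    · have hAx := mulVec_eq_zero_of_mul_eq_zero_of_mulVec_eq_smul hAC hCx hμ
      exact ⟨x, hx, by rw [add_mulVec, hAx, hCx, zero_add]⟩
end

section
/- Let B1 be a real n0×n1 matrix, B2 a real n1×n2 matrix, D_V an n0×n0 positive definite diagonal real matrix, and D_T an n2×n2 positive definite diagonal real matrix. Then there exists k0 > 0 such that for every k ≥ k0, the symmetric block matrix Ω with blocks Ω_{VV} = D_V⁻¹, Ω_{EE} = k·I_{n1}, Ω_{TT} = D_T⁻¹, Ω_{VE} = −B1, Ω_{ET} = −B2, Ω_{VT} = 0 (and transposed blocks accordingly) is positive definite. -/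
open Matrix

section Aux

variable {m n : Type*} [Fintype m] [Fintype n]

private lemma sum_elim_ne_zero_of_right {x : m → ℝ} {y : n → ℝ} (hy : y ≠ 0) :
    Sum.elim x y ≠ 0 := fun h => hy (funext fun i => congrFun h (Sum.inr i))

private lemma sum_elim_ne_zero_of_left {x : m → ℝ} {y : n → ℝ} (hx : x ≠ 0) :
    Sum.elim x y ≠ 0 := fun h => hx (funext fun i => congrFun h (Sum.inl i))

/-- Schur complement criterion (1,1 block): sufficiency for positive definiteness. -/
private lemma posDef_fromBlocks₁₁_of_schur [DecidableEq m] [DecidableEq n]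
    {A : Matrix m m ℝ} (B : Matrix m n ℝ) (D : Matrix n n ℝ) (hA : A.PosDef) [Invertible A]
    (h : (D - Bᴴ * A⁻¹ * B).PosDef) : (fromBlocks A B Bᴴ D).PosDef := by
  refine PosDef.of_dotProduct_mulVec_pos ((Matrix.IsHermitian.fromBlocks₁₁ B D hA.1).mpr h.1) fun z hz => ?_
  rw [dotProduct_mulVec, ← Sum.elim_comp_inl_inr z, schur_complement_eq₁₁ B D _ _ hA.1]
  by_cases hy : z ∘ Sum.inr = 0
  · have hx : z ∘ Sum.inl ≠ 0 := by
      intro hx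
      apply hz
      rw [← Sum.elim_comp_inl_inr z, hx, hy]
      ext (i | i) <;> simp
    have h1 : (0 : ℝ) < star (z ∘ Sum.inl + (A⁻¹ * B) *ᵥ (z ∘ Sum.inr)) ᵥ* A ⬝ᵥ
        (z ∘ Sum.inl + (A⁻¹ * B) *ᵥ (z ∘ Sum.inr)) := by
      rw [hy]
      simp only [mulVec_zero, add_zero]
      have := hA.dotProduct_mulVec_pos hx
      rwa [dotProduct_mulVec] at this
    have h2 : (0 : ℝ) ≤ star (z ∘ Sum.inr) ᵥ* (D - Bᴴ * A⁻¹ * B) ⬝ᵥ (z ∘ Sum.inr) := by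
      rw [← dotProduct_mulVec]
      exact h.posSemidef.dotProduct_mulVec_nonneg _
    linarith
  · have h1 : (0 : ℝ) ≤ star (z ∘ Sum.inl + (A⁻¹ * B) *ᵥ (z ∘ Sum.inr)) ᵥ* A ⬝ᵥ
        (z ∘ Sum.inl + (A⁻¹ * B) *ᵥ (z ∘ Sum.inr)) := by
      rw [← dotProduct_mulVec]
      exact hA.posSemidef.dotProduct_mulVec_nonneg _
    have h2 : (0 : ℝ) < star (z ∘ Sum.inr) ᵥ* (D - Bᴴ * A⁻¹ * B) ⬝ᵥ (z ∘ Sum.inr) := by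
      rw [← dotProduct_mulVec]
      exact h.dotProduct_mulVec_pos hy
    linarith

/-- Schur complement criterion (2,2 block): sufficiency for positive definiteness. -/
private lemma posDef_fromBlocks₂₂_of_schur [DecidableEq m] [DecidableEq n]
    (A : Matrix m m ℝ) (B : Matrix m n ℝ) {D : Matrix n n ℝ} (hD : D.PosDef) [Invertible D]
    (h : (A - B * D⁻¹ * Bᴴ).PosDef) : (fromBlocks A B Bᴴ D).PosDef := by
  refine PosDef.of_dotProduct_mulVec_pos ((Matrix.IsHermitian.fromBlocks₂₂ A B hD.1).mpr h.1) fun z hz => ?_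
  rw [dotProduct_mulVec, ← Sum.elim_comp_inl_inr z, schur_complement_eq₂₂ A B _ _ hD.1]
  by_cases hx : z ∘ Sum.inl = 0
  · have hy : z ∘ Sum.inr ≠ 0 := by
      intro hy
      apply hz
      rw [← Sum.elim_comp_inl_inr z, hx, hy]
      ext (i | i) <;> simp
    have h1 : (0 : ℝ) < star ((D⁻¹ * Bᴴ) *ᵥ (z ∘ Sum.inl) + z ∘ Sum.inr) ᵥ* D ⬝ᵥ
        ((D⁻¹ * Bᴴ) *ᵥ (z ∘ Sum.inl) + z ∘ Sum.inr) := by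
      rw [hx]
      simp only [mulVec_zero, zero_add]
      have := hD.dotProduct_mulVec_pos hy
      rwa [dotProduct_mulVec] at this
    have h2 : (0 : ℝ) ≤ star (z ∘ Sum.inl) ᵥ* (A - B * D⁻¹ * Bᴴ) ⬝ᵥ (z ∘ Sum.inl) := by
      rw [← dotProduct_mulVec]
      exact h.posSemidef.dotProduct_mulVec_nonneg _
    linarith
  · have h1 : (0 : ℝ) ≤ star ((D⁻¹ * Bᴴ) *ᵥ (z ∘ Sum.inl) + z ∘ Sum.inr) ᵥ* D ⬝ᵥ
        ((D⁻¹ * Bᴴ) *ᵥ (z ∘ Sum.inl) + z ∘ Sum.inr) := by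
      rw [← dotProduct_mulVec]
      exact hD.posSemidef.dotProduct_mulVec_nonneg _
    have h2 : (0 : ℝ) < star (z ∘ Sum.inl) ᵥ* (A - B * D⁻¹ * Bᴴ) ⬝ᵥ (z ∘ Sum.inl) := by
      rw [← dotProduct_mulVec]
      exact h.dotProduct_mulVec_pos hx
    linarith

/-- For a symmetric real matrix `S`, `k • 1 - S` is positive definite for all large `k`. -/
private lemma exists_smul_one_sub_posDef {n : ℕ} (S : Matrix (Fin n) (Fin n) ℝ)
    (hS : S.IsHermitian) :
    ∃ k0 : ℝ, 0 < k0 ∧ ∀ k : ℝ, k0 ≤ k →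
      (k • (1 : Matrix (Fin n) (Fin n) ℝ) - S).PosDef := by
  set C : ℝ := ∑ i, ∑ j, |S i j| with hC
  have hCnn : 0 ≤ C := Finset.sum_nonneg fun i _ =>
    Finset.sum_nonneg fun j _ => abs_nonneg _
  refine ⟨C + 1, by linarith, fun k hk => ?_⟩
  refine PosDef.of_dotProduct_mulVec_pos ?_ ?_
  · show _ᴴ = _
    rw [conjTranspose_sub, conjTranspose_smul, conjTranspose_one, hS.eq, star_trivial]
  · intro x hx
    have hN : 0 < ∑ l, x l ^ 2 := by
      have : ∃ i, x i ≠ 0 := by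
        by_contra hcon
        push_neg at hcon
        exact hx (funext hcon)
      obtain ⟨i, hi⟩ := this
      exact Finset.sum_pos' (fun l _ => sq_nonneg _)
        ⟨i, Finset.mem_univ i, by positivity⟩
    set N : ℝ := ∑ l, x l ^ 2 with hNdef
    have key : star x ⬝ᵥ ((k • (1 : Matrix (Fin n) (Fin n) ℝ) - S) *ᵥ x)
        = k * N - ∑ i, ∑ j, x i * (S i j * x j) := by
      have hmv : ∀ i, ((k • (1 : Matrix (Fin n) (Fin n) ℝ) - S) *ᵥ x) i
          = k * x i - ∑ j, S i j * x j := by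
        intro i
        simp [sub_mulVec, smul_mulVec, one_mulVec, mulVec, dotProduct, sub_mul,
          Finset.sum_sub_distrib, Matrix.one_apply, ite_mul, mul_ite]
      simp only [star_trivial, dotProduct, hmv, mul_sub]
      rw [Finset.sum_sub_distrib, hNdef, Finset.mul_sum]
      congr 1
      · exact Finset.sum_congr rfl fun l _ => by ring
      · exact Finset.sum_congr rfl fun i _ => by rw [Finset.mul_sum]
    rw [key]
    have hbound : ∑ i, ∑ j, x i * (S i j * x j) ≤ C * N := by
      rw [hC, Finset.sum_mul]
      refine Finset.sum_le_sum fun i _ => ?_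
      rw [Finset.sum_mul]
      refine Finset.sum_le_sum fun j _ => ?_
      have hxi : x i ^ 2 ≤ N := Finset.single_le_sum (fun l _ => sq_nonneg (x l))
        (Finset.mem_univ i)
      have hxj : x j ^ 2 ≤ N := Finset.single_le_sum (fun l _ => sq_nonneg (x l))
        (Finset.mem_univ j)
      have habs : |x i * x j| ≤ N := by
        have h1 : |x i * x j| ≤ (x i ^ 2 + x j ^ 2) / 2 := by
          rw [abs_mul]
          nlinarith [sq_nonneg (|x i| - |x j|), sq_abs (x i), sq_abs (x j)]
        linarith
      calc x i * (S i j * x j) ≤ |x i * (S i j * x j)| := le_abs_self _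
        _ = |S i j| * |x i * x j| := by rw [abs_mul, abs_mul, abs_mul]; ring
        _ ≤ |S i j| * N := by
            exact mul_le_mul_of_nonneg_left habs (abs_nonneg _)
    have : (C + 1) * N ≤ k * N := mul_le_mul_of_nonneg_right hk hN.le
    nlinarith

end Aux

/-- For any incidence matrices `B1`, `B2` and positive definite diagonal matrices
`D_V`, `D_T`, there exists `k0 > 0` such that for all `k ≥ k0` the SGM block
precision matrix `Ω` is positive definite. -/
theorem sgm_posdef_for_large_k
    (n0 n1 n2 : ℕ)
    (B1 : Matrix (Fin n0) (Fin n1) ℝ) (B2 : Matrix (Fin n1) (Fin n2) ℝ)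
    (DV : Matrix (Fin n0) (Fin n0) ℝ) (DT : Matrix (Fin n2) (Fin n2) ℝ)
    (hDVdiag : DV.IsDiag) (hDVpd : DV.PosDef)
    (hDTdiag : DT.IsDiag) (hDTpd : DT.PosDef) :
    ∃ k0 : ℝ, 0 < k0 ∧ ∀ k : ℝ, k0 ≤ k →
      (fromBlocks DV⁻¹ (fromCols (-B1) 0) (fromRows (-B1ᵀ) 0)
        (fromBlocks (k • (1 : Matrix (Fin n1) (Fin n1) ℝ)) (-B2) (-B2ᵀ) DT⁻¹)).PosDef := by
  -- The matrix to be handled after two Schur complement reductions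
  set S : Matrix (Fin n1) (Fin n1) ℝ := B1ᵀ * DV * B1 + B2 * DT * B2ᵀ with hSdef
  have hB1 : B1ᵀ = B1ᴴ := (conjTranspose_eq_transpose_of_trivial B1).symm
  have hB2 : B2ᵀ = B2ᴴ := (conjTranspose_eq_transpose_of_trivial B2).symm
  have hSherm : S.IsHermitian := by
    rw [hSdef, hB1]
    refine IsHermitian.add (isHermitian_conjTranspose_mul_mul B1 hDVpd.1) ?_
    have := isHermitian_conjTranspose_mul_mul B2ᴴ hDTpd.1
    simpa using this
  obtain ⟨k0, hk0, hk⟩ := exists_smul_one_sub_posDef S hSherm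
  refine ⟨k0, hk0, fun k hkk => ?_⟩
  -- invertibility instances
  have hDVinv : DV⁻¹.PosDef := hDVpd.inv
  have hDTinv : DT⁻¹.PosDef := hDTpd.inv
  haveI : Invertible DV := hDVpd.isUnit.invertible
  haveI : Invertible DT := hDTpd.isUnit.invertible
  haveI : Invertible DV⁻¹ := hDVinv.isUnit.invertible
  haveI : Invertible DT⁻¹ := hDTinv.isUnit.invertible
  -- rewrite the bottom-left block as a conjugate transpose
  have hcol : fromRows (-B1ᵀ) 0 = (fromCols (-B1) (0 : Matrix (Fin n0) (Fin n2) ℝ))ᴴ := by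
    rw [conjTranspose_fromCols_eq_fromRows_conjTranspose, conjTranspose_neg, ← hB1,
      conjTranspose_zero]
  rw [hcol]
  apply posDef_fromBlocks₁₁_of_schur _ _ hDVinv
  -- compute the first Schur complement
  have hDVinvinv : (DV⁻¹)⁻¹ = DV := inv_inv_of_invertible DV
  have hschur1 :
      (fromBlocks (k • (1 : Matrix (Fin n1) (Fin n1) ℝ)) (-B2) (-B2ᵀ) DT⁻¹)
        - (fromCols (-B1) (0 : Matrix (Fin n0) (Fin n2) ℝ))ᴴ * (DV⁻¹)⁻¹
          * fromCols (-B1) (0 : Matrix (Fin n0) (Fin n2) ℝ)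
      = fromBlocks (k • (1 : Matrix (Fin n1) (Fin n1) ℝ) - B1ᵀ * DV * B1) (-B2) (-B2ᵀ) DT⁻¹ := by
    rw [hDVinvinv, conjTranspose_fromCols_eq_fromRows_conjTranspose, fromRows_mul,
      fromRows_mul_fromCols]
    ext (i | i) (j | j) <;>
      simp [fromBlocks, Matrix.mul_apply, Matrix.sub_apply, Finset.sum_mul, mul_comm,
        mul_left_comm]
  rw [hschur1]
  -- second Schur complement
  have hB2' : -B2ᵀ = (-B2)ᴴ := by rw [conjTranspose_neg, ← hB2]
  rw [hB2']
  apply posDef_fromBlocks₂₂_of_schur _ _ hDTinv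
  have hDTinvinv : (DT⁻¹)⁻¹ = DT := inv_inv_of_invertible DT
  have hschur2 :
      (k • (1 : Matrix (Fin n1) (Fin n1) ℝ) - B1ᵀ * DV * B1) - (-B2) * (DT⁻¹)⁻¹ * (-B2)ᴴ
      = k • (1 : Matrix (Fin n1) (Fin n1) ℝ) - S := by
    rw [hDTinvinv, hSdef, conjTranspose_neg, ← hB2]
    simp only [Matrix.neg_mul, Matrix.mul_neg, neg_neg, sub_add_eq_sub_sub]
  rw [hschur2]
  exact hk k hkk
end
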